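/- The number of balanced Boolean functions on F_2^n of degree at most n/2 (n even, n ≥ 2) satisfies |A^{n/2}_n(2^{n-1})| ≥ 2^{2^{n-1}−1} / 2^{2n−2}. -/

import Mathlib

/-- The monomial `x_1^{y_1} ⋯ x_n^{y_n}`. -/
def monom {n : ℕ} (y x : Fin n → ZMod 2) : ZMod 2 := ∏ i, (x i) ^ (y i).val

/-- Hamming weight of a vector. -/
def hwt {n : ℕ} (y : Fin n → ZMod 2) : ℕ := (Finset.univ.filter fun i => y i = 1).card

/-- A Boolean function has algebraic degree at most `k` if its algebraic normal
form uses only monomials of degree at most `k`. -/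
def degLE (n k : ℕ) (f : (Fin n → ZMod 2) → ZMod 2) : Prop :=
  ∃ g : (Fin n → ZMod 2) → ZMod 2,
    (∀ y, k < hwt y → g y = 0) ∧ ∀ x, f x = ∑ y, g y * monom y x

/-- Weight of a Boolean function: the number of inputs where it equals `1`. -/
def wt {n : ℕ} (f : (Fin n → ZMod 2) → ZMod 2) : ℕ :=
  (Finset.univ.filter fun x => f x = 1).card

/-- `A n k t` is the set of Boolean functions on `F_2^n` of algebraic degree at
most `k` and weight `t`. -/
def A (n k t : ℕ) : Set ((Fin n → ZMod 2) → ZMod 2) :=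
  {f | degLE n k f ∧ wt f = t}

/-!
Write `f₀ ‖ f₁` for the function on `n` variables that restricts to `f₀` on `x₀ = 0` and to `f₁`
on `x₀ = 1`; it equals `f₀ + x₀ (f₀ + f₁)`, so it has degree `≤ k + 1` when `f₀, f₁` have degree
`≤ k`, and weight `wt f₀ + wt f₁`. Hence `f₀ ‖ (g + 1)` is balanced whenever `wt f₀ = wt g`, so
the balanced functions of degree `≤ n/2` are at least as many as the pairs of functions of degree
`≤ n/2 - 1` on `n - 1` variables with equal weights. By Cauchy–Schwarz over the `2^(n-1) + 1`
possible weights there are at least `|D|² / (2^(n-1) + 1)` such pairs, where `D` is the set of all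
functions of degree `≤ n/2 - 1`. Uniqueness of the algebraic normal form gives
`|D| = 2^#{y : hwt y ≤ n/2 - 1}`, and since `n - 1` is odd, complementation shows that this
exponent is `2^(n-2)`.
-/

open Finset

theorem Finset.card_filter_eq_fst_snd_eq_sum_sq {ι κ : Type*} [DecidableEq κ] {s : Finset ι}
    {t : Finset κ} {f : ι → κ} (H : Set.MapsTo f s t) :
    #{p ∈ s ×ˢ s | f p.1 = f p.2} = ∑ b ∈ t, #{a ∈ s | f a = b} ^ 2 := by
  rw [card_eq_sum_card_fiberwise (f := fun p => f p.1) (t := t)]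
  · refine sum_congr rfl fun b _ => ?_
    rw [sq, ← card_product]
    congr 1
    ext ⟨a, a'⟩
    simp only [mem_filter, mem_product]
    grind
  · intro p hp
    exact H (mem_product.1 (mem_filter.1 hp).1).1

theorem Finset.sq_card_le_card_mul_card_filter_eq {ι κ : Type*} [DecidableEq κ] {s : Finset ι}
    {t : Finset κ} {f : ι → κ} (H : Set.MapsTo f s t) :
    #s ^ 2 ≤ #t * #{p ∈ s ×ˢ s | f p.1 = f p.2} := by
  rw [card_filter_eq_fst_snd_eq_sum_sq H, card_eq_sum_card_fiberwise H]
  exact sq_sum_le_card_mul_sum_sq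

theorem Fin.sum_zmod_two_cons {M : Type*} [AddCommMonoid M] {m : ℕ}
    (F : (Fin (m + 1) → ZMod 2) → M) :
    ∑ x, F x = ∑ x, F (Fin.cons 0 x) + ∑ x, F (Fin.cons 1 x) := by
  rw [← (Fin.consEquiv fun _ => ZMod 2).sum_comp, Fintype.sum_prod_type]
  exact Fin.sum_univ_two _

theorem ZMod.card_filter_add_one_eq_one {α : Type*} [Fintype α] (f : α → ZMod 2) :
    #{x | f x + 1 = 1} = Fintype.card α - #{x | f x = 1} := by
  have h : ∀ v : ZMod 2, v + 1 = 1 ↔ ¬v = 1 := by decide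
  simp only [h]
  have := card_filter_add_card_filter_not (s := univ) (fun x => f x = 1)
  rw [card_univ] at this
  omega

def anf {n : ℕ} : ((Fin n → ZMod 2) → ZMod 2) →+ ((Fin n → ZMod 2) → ZMod 2) where
  toFun g x := ∑ y, g y * monom y x
  map_zero' := by ext; simp
  map_add' g g' := by ext; simp [add_mul, sum_add_distrib]

theorem anf_apply {n : ℕ} (g : (Fin n → ZMod 2) → ZMod 2) (x : Fin n → ZMod 2) :
    anf g x = ∑ y, g y * monom y x := rfl

theorem degLE_iff_exists_anf {n k : ℕ} {f : (Fin n → ZMod 2) → ZMod 2} :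
    degLE n k f ↔ ∃ g, (∀ y, k < hwt y → g y = 0) ∧ anf g = f := by
  simp only [degLE, funext_iff, anf_apply, eq_comm]

@[simp]
theorem monom_zero {n : ℕ} (x : Fin n → ZMod 2) : monom 0 x = 1 := by
  simp [monom]

@[simp]
theorem monom_self {n : ℕ} (x : Fin n → ZMod 2) : monom x x = 1 := by
  have h : ∀ v : ZMod 2, v ^ v.val = 1 := by decide
  simp [monom, h]

theorem monom_cons_cons {n : ℕ} (c b : ZMod 2) (y x : Fin n → ZMod 2) :
    monom (Fin.cons c y) (Fin.cons b x) = b ^ c.val * monom y x := by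
  simp [monom, Fin.prod_univ_succ]

theorem monom_ne_zero_iff {n : ℕ} {y x : Fin n → ZMod 2} :
    monom y x ≠ 0 ↔ ∀ i, y i = 1 → x i = 1 := by
  have h : ∀ a b : ZMod 2, a ^ b.val ≠ 0 ↔ (b = 1 → a = 1) := by decide
  simp only [monom, prod_ne_zero_iff, mem_univ, true_implies, h]

theorem eq_of_monom_ne_zero_of_hwt_le {n : ℕ} {y x : Fin n → ZMod 2} (h : monom y x ≠ 0)
    (hle : hwt x ≤ hwt y) : y = x := by
  have hsub : (univ.filter fun i => y i = 1) ⊆ univ.filter fun i => x i = 1 := by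
    intro i
    simpa using monom_ne_zero_iff.1 h i
  have hsupp := eq_of_subset_of_card_le hsub hle
  have hZ : ∀ a b : ZMod 2, (a = 1 ↔ b = 1) → a = b := by decide
  funext i
  exact hZ _ _ (by simpa using congrArg (i ∈ ·) hsupp)

theorem anf_injective {n : ℕ} : Function.Injective (anf (n := n)) := by
  refine (injective_iff_map_eq_zero _).2 fun g hg => ?_
  by_contra hne
  obtain ⟨y₀, hy₀, hmin⟩ := exists_min_image {y | g y ≠ 0} hwt
    (by simpa [Finset.Nonempty, funext_iff] using hne)
  rw [mem_filter] at hy₀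
  -- `monom y y₀ = 0` for every other `y` in the support, as `y₀` has minimal weight there.
  have hval : anf g y₀ = g y₀ := by
    rw [anf_apply, sum_eq_single y₀ _ (by simp), monom_self, mul_one]
    intro y _ hy
    by_contra hy'
    obtain ⟨hg, hm⟩ := mul_ne_zero_iff.1 hy'
    exact hy (eq_of_monom_ne_zero_of_hwt_le hm (hmin y (by simpa using hg)))
  exact hy₀.2 (hval.symm.trans (congrFun hg y₀))

open Classical in
theorem card_degLE (m k : ℕ) :
    #{f : (Fin m → ZMod 2) → ZMod 2 | degLE m k f} = 2 ^ #{y : Fin m → ZMod 2 | hwt y ≤ k} := by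
  have himage : ({f | degLE m k f} : Finset _) =
      (Fintype.piFinset fun y => if hwt y ≤ k then univ else {0}).image anf := by
    ext f
    simp only [mem_filter, mem_univ, true_and, mem_image, Fintype.mem_piFinset,
      degLE_iff_exists_anf]
    refine exists_congr fun g => and_congr_left' (forall_congr' fun y => ?_)
    split_ifs with h
    · simp [h]
    · simp [not_le.1 h]
  rw [himage, card_image_of_injective _ anf_injective, Fintype.card_piFinset]
  simp only [apply_ite card, card_univ, ZMod.card, card_singleton]
  rw [prod_ite, prod_const, prod_const_one, mul_one]

theorem hwt_add_one {m : ℕ} (y : Fin m → ZMod 2) : hwt (y + 1) = m - hwt y := by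
  have h := ZMod.card_filter_add_one_eq_one y
  rw [Fintype.card_fin] at h
  exact h

theorem wt_add_one {m : ℕ} (f : (Fin m → ZMod 2) → ZMod 2) : wt (f + 1) = 2 ^ m - wt f := by
  rw [show 2 ^ m = Fintype.card (Fin m → ZMod 2) by simp]
  exact ZMod.card_filter_add_one_eq_one f

theorem wt_le {m : ℕ} (f : (Fin m → ZMod 2) → ZMod 2) : wt f ≤ 2 ^ m :=
  (card_filter_le _ _).trans_eq (by simp)

theorem two_mul_card_hwt_le (j : ℕ) :
    2 * #{y : Fin (2 * j + 1) → ZMod 2 | hwt y ≤ j} = 2 ^ (2 * j + 1) := by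
  have hinv : ∀ y : Fin (2 * j + 1) → ZMod 2, y + 1 + 1 = y := by
    intro y
    ext i
    simp only [Pi.add_apply, Pi.one_apply, add_assoc]
    exact add_eq_left.2 (by decide)
  have hcompl : #{y : Fin (2 * j + 1) → ZMod 2 | hwt y ≤ j} =
      #{y : Fin (2 * j + 1) → ZMod 2 | ¬hwt y ≤ j} := by
    refine card_nbij' (· + 1) (· + 1) ?_ ?_ (fun y _ => hinv y) (fun y _ => hinv y) <;>
      · intro y
        simp only [coe_filter, mem_univ, true_and, Set.mem_ofPred_eq, hwt_add_one]
        omega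
  have hsplit := card_filter_add_card_filter_not (s := univ) fun y : Fin (2 * j + 1) → ZMod 2 =>
    hwt y ≤ j
  simp only [card_univ, Fintype.card_fun, ZMod.card, Fintype.card_fin] at hsplit
  omega

theorem degLE_add_one {m k : ℕ} {f : (Fin m → ZMod 2) → ZMod 2} (hf : degLE m k f) :
    degLE m k (f + 1) := by
  obtain ⟨g, hg, rfl⟩ := degLE_iff_exists_anf.1 hf
  have hone : anf (Pi.single 0 1) = (1 : (Fin m → ZMod 2) → ZMod 2) := by
    ext x
    simp [anf_apply, Pi.single_apply]
  refine degLE_iff_exists_anf.2 ⟨g + Pi.single 0 1, fun y hy => ?_, by rw [map_add, hone]⟩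
  have hy0 : y ≠ 0 := by
    rintro rfl
    simp [hwt] at hy
  simp [hg y hy, hy0]

theorem hwt_cons_le {m : ℕ} (b : ZMod 2) (y : Fin m → ZMod 2) :
    hwt (Fin.cons b y : Fin (m + 1) → ZMod 2) ≤ hwt y + 1 := by
  simp only [hwt, card_filter, Fin.sum_univ_succ, Fin.cons_zero, Fin.cons_succ]
  split_ifs <;> omega

def concat {m : ℕ} (f₀ f₁ : (Fin m → ZMod 2) → ZMod 2) : (Fin (m + 1) → ZMod 2) → ZMod 2 :=
  fun x => if x 0 = 1 then f₁ (Fin.tail x) else f₀ (Fin.tail x)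

section concat

variable {m : ℕ} (f₀ f₁ : (Fin m → ZMod 2) → ZMod 2)

@[simp]
theorem concat_cons (b : ZMod 2) (x : Fin m → ZMod 2) :
    concat f₀ f₁ (Fin.cons b x) = if b = 1 then f₁ x else f₀ x := by
  simp [concat]

theorem concat_injective2 : Function.Injective2 (concat (m := m)) := by
  intro f₀ g₀ f₁ g₁ h
  constructor <;> ext x
  · simpa using congrFun h (Fin.cons 0 x)
  · simpa using congrFun h (Fin.cons 1 x)

theorem wt_concat : wt (concat f₀ f₁) = wt f₀ + wt f₁ := by
  simp only [wt, card_filter, Fin.sum_zmod_two_cons, concat_cons]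
  simp

theorem anf_concat : anf (concat f₀ (f₀ + f₁)) = concat (anf f₀) (anf f₁) := by
  ext x
  induction x using Fin.consCases with
  | cons b x =>
  simp only [anf_apply, Fin.sum_zmod_two_cons, concat_cons, monom_cons_cons]
  obtain rfl | rfl : b = 0 ∨ b = 1 := by decide +revert
  · simp
  · simp [ZMod.val_one, add_mul, sum_add_distrib, ← add_assoc, CharTwo.add_self_eq_zero]

end concat

theorem degLE_concat {m k : ℕ} {f₀ f₁ : (Fin m → ZMod 2) → ZMod 2} (h₀ : degLE m k f₀)
    (h₁ : degLE m k f₁) : degLE (m + 1) (k + 1) (concat f₀ f₁) := by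
  obtain ⟨g₀, hg₀, rfl⟩ := degLE_iff_exists_anf.1 h₀
  obtain ⟨g₁, hg₁, rfl⟩ := degLE_iff_exists_anf.1 h₁
  refine degLE_iff_exists_anf.2 ⟨concat g₀ (g₀ + g₁), fun y hy => ?_, anf_concat g₀ g₁⟩
  induction y using Fin.consCases with
  | cons b y =>
  have hy' : k < hwt y := by
    have := hwt_cons_le b y
    omega
  simp [hg₀ y hy', hg₁ y hy']

open Classical in
theorem sq_card_degLE_le (m k : ℕ) :
    #{f : (Fin m → ZMod 2) → ZMod 2 | degLE m k f} ^ 2 ≤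
      (2 ^ m + 1) * (A (m + 1) (k + 1) (2 ^ m)).ncard := by
  set D : Finset ((Fin m → ZMod 2) → ZMod 2) := {f | degLE m k f}
  have hmaps : Set.MapsTo wt (D : Set _) (range (2 ^ m + 1)) := fun f _ => by
    simpa [Nat.lt_succ_iff] using wt_le f
  calc #D ^ 2 ≤ (2 ^ m + 1) * #{p ∈ D ×ˢ D | wt p.1 = wt p.2} := by
        simpa using sq_card_le_card_mul_card_filter_eq hmaps
    _ ≤ (2 ^ m + 1) * (A (m + 1) (k + 1) (2 ^ m)).ncard := by
        gcongr
        rw [← Set.ncard_coe_finset]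
        refine Set.ncard_le_ncard_of_injOn (fun p => concat p.1 (p.2 + 1)) ?_ ?_ (Set.toFinite _)
        · intro p hp
          simp only [coe_filter, mem_product, D, mem_filter, mem_univ, true_and] at hp
          obtain ⟨⟨h₀, h₁⟩, hw⟩ := hp
          refine ⟨degLE_concat h₀ (degLE_add_one h₁), ?_⟩
          have := wt_le p.2
          rw [wt_concat, wt_add_one]
          omega
        · intro p _ q _ h
          obtain ⟨h₀, h₁⟩ := concat_injective2 h
          exact Prod.ext h₀ (add_right_cancel h₁)

theorem stmt17 (n : ℕ) (hn : Even n) (hn2 : 2 ≤ n) :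
    ((A n (n / 2) (2 ^ (n - 1))).ncard : ℚ) ≥
      2 ^ (2 ^ (n - 1) - 1) / 2 ^ (2 * n - 2) := by
  obtain ⟨j, rfl⟩ : ∃ j, n = 2 * j + 1 + 1 := by
    obtain ⟨r, rfl⟩ := hn
    exact ⟨r - 1, by omega⟩
  have hcount := sq_card_degLE_le (2 * j + 1) j
  rw [card_degLE, ← pow_mul, mul_comm, two_mul_card_hwt_le] at hcount
  rw [show (2 * j + 1 + 1) / 2 = j + 1 by omega, show 2 * j + 1 + 1 - 1 = 2 * j + 1 by omega,
    show 2 * (2 * j + 1 + 1) - 2 = 4 * j + 2 by omega, ge_iff_le, div_le_iff₀ (by positivity)]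
  set N := 2 ^ (2 * j + 1)
  set c := (A (2 * j + 1 + 1) (j + 1) N).ncard
  have hN : N + 1 ≤ 2 * 2 ^ (4 * j + 2) := by
    have : N ≤ 2 ^ (4 * j + 2) := Nat.pow_le_pow_right two_pos (by omega)
    have : 1 ≤ 2 ^ (4 * j + 2) := Nat.one_le_two_pow
    omega
  have hhalf : 2 * 2 ^ (N - 1) = 2 ^ N := by
    rw [← pow_succ', Nat.sub_add_cancel Nat.one_le_two_pow]
  have key : 2 ^ (N - 1) ≤ c * 2 ^ (4 * j + 2) := by nlinarith
  exact_mod_cast key
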